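/- In the dodecahedron graph, for every 5-cycle C with vertices u₀,…,u₄, pendant neighbours v₀,…,v₄, the strong-neighbourhood subgraph S̃ of S = {u₀,…,u₄,v₀,…,v₄} is isomorphic to the graph X₇: the corona C₅∘K₁ together with five additional vertices v_{i,i+1} (indices mod 5), each adjacent to exactly vᵢ and v_{i+1}. -/

import Mathlib

open scoped Classical

/-- The dodecahedron graph, realized as the generalized Petersen graph $GP(10,2)$. -/
def dodecahedron : SimpleGraph (Fin 2 × Fin 10) :=
  SimpleGraph.fromRel (fun a b =>
    (a.1 = 0 ∧ b.1 = 0 ∧ b.2 = a.2 + 1) ∨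
    (a.1 = 0 ∧ b.1 = 1 ∧ a.2 = b.2) ∨
    (a.1 = 1 ∧ b.1 = 1 ∧ b.2 = a.2 + 2))

/-- The spanning subgraph of `G` consisting of the edges with at least one
endpoint in `S` (the edge set of the subgraph `S̃`). -/
def edgeWithin {V : Type*} (G : SimpleGraph V) (S : Set V) : SimpleGraph V where
  Adj a b := G.Adj a b ∧ (a ∈ S ∨ b ∈ S)
  symm := ⟨fun _ _ h => ⟨h.1.symm, h.2.symm⟩⟩
  loopless := ⟨fun a h => G.loopless.irrefl a h.1⟩

/-- The strong open neighbourhood: vertices outside `S` with at least two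
neighbours inside `S`. -/
def strongNbhd {V : Type*} (G : SimpleGraph V) (S : Set V) : Set V :=
  {w | w ∉ S ∧ ∃ a ∈ S, ∃ b ∈ S, a ≠ b ∧ G.Adj w a ∧ G.Adj w b}

/-- The subgraph `S̃`: vertex set `S ∪ N≥2(S)`, edges of `G` meeting `S`. -/
def sTilde {V : Type*} (G : SimpleGraph V) (S : Set V) :
    SimpleGraph ↥(S ∪ strongNbhd G S) :=
  SimpleGraph.induce (S ∪ strongNbhd G S) (edgeWithin G S)

/-- The graph `X₇`: the corona `C₅ ∘ K₁` (cycle vertices `(i,0)`, pendants `(i,1)`)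
together with five extra vertices `(i,2)`, each adjacent to exactly `(i,1)` and
`(i+1,1)`. -/
def X7 : SimpleGraph (Fin 5 × Fin 3) :=
  SimpleGraph.fromRel (fun a b =>
    (a.2 = 0 ∧ b.2 = 0 ∧ b.1 = a.1 + 1) ∨
    (a.2 = 0 ∧ b.2 = 1 ∧ a.1 = b.1) ∨
    (a.2 = 2 ∧ b.2 = 1 ∧ (b.1 = a.1 ∨ b.1 = a.1 + 1)))

/-! The automorphism group of the dodecahedron is transitive on 2-arcs: the rotations and
`twist` move any vertex to `(1, 0)`, and the stabiliser of `(1, 0)`, generated by a rotation of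
order 3 about it and a reflection, is transitive on the 2-arcs leaving it. A 2-arc lies on a
unique pentagon (girth 5), so every 5-cycle is carried to the inner pentagon, where its pendants
are forced and `S̃` is checked by computation. Graph isomorphisms transport `S̃`. -/

instance : DecidableRel dodecahedron.Adj := fun a b =>
  decidable_of_iff _ (SimpleGraph.fromRel_adj _ a b).symm

instance : DecidableRel X7.Adj := fun a b =>
  decidable_of_iff _ (SimpleGraph.fromRel_adj _ a b).symm

namespace SimpleGraph.Iso

variable {V W : Type*} {G : SimpleGraph V} {H : SimpleGraph W}

theorem image_strongNbhd (e : G ≃g H) (S : Set V) :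
    e '' strongNbhd G S = strongNbhd H (e '' S) := by
  ext y
  obtain ⟨x, rfl⟩ := e.surjective y
  simp only [strongNbhd, Set.mem_ofPred_eq, e.injective.mem_set_image, Set.exists_mem_image,
    e.injective.ne_iff, e.map_adj_iff]

def edgeWithin (e : G ≃g H) (S : Set V) :
    _root_.edgeWithin G S ≃g _root_.edgeWithin H (e '' S) where
  toEquiv := e.toEquiv
  map_rel_iff' {a b} := by
    change (H.Adj (e a) (e b) ∧ (e a ∈ e '' S ∨ e b ∈ e '' S)) ↔ (G.Adj a b ∧ _)
    rw [e.map_adj_iff, e.injective.mem_set_image, e.injective.mem_set_image]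

def sTilde (e : G ≃g H) (S : Set V) : _root_.sTilde G S ≃g _root_.sTilde H (e '' S) :=
  (e.edgeWithin S).induce <| by
    rw [← image_strongNbhd e S, ← Set.image_union]
    exact e.injective.injOn.bijOn_image

end SimpleGraph.Iso

namespace dodecahedron

def rotation : dodecahedron ≃g dodecahedron :=
  ⟨Equiv.addRight (0, 1), by decide⟩

def reflection : dodecahedron ≃g dodecahedron :=
  ⟨Equiv.neg _, by decide⟩

def twistFun (p : Fin 2 × Fin 10) : Fin 2 × Fin 10 :=
  ![![(0, 0), (0, 1), (1, 1), (1, 3), (1, 5), (0, 5), (0, 6), (1, 6), (1, 8), (1, 0)],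
    ![(0, 9), (0, 2), (1, 9), (0, 3), (1, 7), (0, 4), (0, 7), (1, 4), (0, 8), (1, 2)]] p.1 p.2

def twist : dodecahedron ≃g dodecahedron :=
  ⟨Function.Involutive.toPerm twistFun fun x => by revert x; decide, by decide⟩

/-- The rotation of order 3 about the vertex `(1, 0)`. -/
def spin : dodecahedron ≃g dodecahedron := rotation * twist * rotation ^ 2

theorem exists_apply_eq (a : Fin 2 × Fin 10) :
    ∃ φ : dodecahedron ≃g dodecahedron, φ a = (1, 0) := by
  obtain ⟨k, hk | hk⟩ : ∃ k : Fin 10,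
      (rotation ^ k.val) a = (1, 0) ∨ (twist * rotation ^ k.val) a = (1, 0) := by
    revert a; decide
  exacts [⟨_, hk⟩, ⟨_, hk⟩]

theorem exists_fix_apply_eq {b c : Fin 2 × Fin 10} (hb : dodecahedron.Adj (1, 0) b)
    (hc : dodecahedron.Adj b c) (hc₀ : c ≠ (1, 0)) :
    ∃ φ : dodecahedron ≃g dodecahedron,
      φ (1, 0) = (1, 0) ∧ φ b = (1, 2) ∧ φ c = (1, 4) := by
  obtain ⟨i, j, hb, hc, h₀⟩ : ∃ i : Fin 3, ∃ j : Fin 2,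
      (spin ^ i.val * reflection ^ j.val) b = (1, 2) ∧
      (spin ^ i.val * reflection ^ j.val) c = (1, 4) ∧
      (spin ^ i.val * reflection ^ j.val) (1, 0) = (1, 0) := by
    revert b c; decide
  exact ⟨_, h₀, hb, hc⟩

theorem eq_of_adj_of_adj_of_adj {d e : Fin 2 × Fin 10} (hd : dodecahedron.Adj (1, 4) d)
    (he : dodecahedron.Adj d e) (he₀ : dodecahedron.Adj e (1, 0)) :
    d = (1, 6) ∧ e = (1, 8) := by
  revert d e; decide

end dodecahedron

namespace X7

/-- The labelling of `S̃` for the inner pentagon `(1, 0), (1, 2), …, (1, 8)`: its pendants are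
the even outer vertices, and the odd outer vertices are the common neighbours of consecutive
pendants. -/
def toDodecahedron : Fin 5 × Fin 3 → Fin 2 × Fin 10
  | (i, 0) => (1, Fin.ofNat 10 (2 * i.val))
  | (i, 1) => (0, Fin.ofNat 10 (2 * i.val))
  | (i, 2) => (0, Fin.ofNat 10 (2 * i.val + 1))

def standardCorona : Set (Fin 2 × Fin 10) :=
  Set.range (fun i => toDodecahedron (i, 0)) ∪ Set.range (fun i => toDodecahedron (i, 1))

theorem range_toDodecahedron :
    Set.range toDodecahedron = standardCorona ∪ strongNbhd dodecahedron standardCorona := by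
  ext x
  simp only [standardCorona, strongNbhd, Set.mem_union, Set.mem_ofPred_eq, Set.mem_range,
    not_or, not_exists]
  revert x; decide

def embedding : X7 ↪g edgeWithin dodecahedron standardCorona where
  toFun := toDodecahedron
  inj' := by decide
  map_rel_iff' {p q} := by
    change (dodecahedron.Adj _ _ ∧ (_ ∈ standardCorona ∨ _ ∈ standardCorona)) ↔ _
    simp only [standardCorona, Set.mem_union, Set.mem_range]
    revert p q; decide

theorem eq_of_adj_of_forall_ne {i : Fin 5} {x : Fin 2 × Fin 10}
    (hx : dodecahedron.Adj (toDodecahedron (i, 0)) x) (hne : ∀ j, x ≠ toDodecahedron (j, 0)) :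
    x = toDodecahedron (i, 1) := by
  revert i x; decide

noncomputable def isoSTilde : X7 ≃g sTilde dodecahedron standardCorona := by
  rw [sTilde, ← range_toDodecahedron]
  exact embedding.isoInduceRange

end X7

theorem dodecahedron.exists_apply_eq_of_isPentagon {u : Fin 5 → Fin 2 × Fin 10}
    (hu : Function.Injective u) (hc : ∀ i, dodecahedron.Adj (u i) (u (i + 1))) :
    ∃ φ : dodecahedron ≃g dodecahedron, ∀ i, φ (u i) = X7.toDodecahedron (i, 0) := by
  obtain ⟨φ₁, hφ₁⟩ := exists_apply_eq (u 0)
  have h₁₀ : dodecahedron.Adj (1, 0) (φ₁ (u 1)) := hφ₁ ▸ φ₁.map_adj_iff.2 (hc 0)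
  have h₂₀ : φ₁ (u 2) ≠ (1, 0) := hφ₁ ▸ φ₁.injective.ne (hu.ne (by decide))
  obtain ⟨φ₂, hφ₂, h₁, h₂⟩ :=
    exists_fix_apply_eq h₁₀ (φ₁.map_adj_iff.2 (hc 1)) h₂₀
  have hadj {i j : Fin 5} (h : dodecahedron.Adj (u i) (u j)) :
      dodecahedron.Adj ((φ₂ * φ₁) (u i)) ((φ₂ * φ₁) (u j)) :=
    (φ₂ * φ₁).map_adj_iff.2 h
  have h₀ : (φ₂ * φ₁) (u 0) = (1, 0) := hφ₁ ▸ hφ₂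
  obtain ⟨h₃, h₄⟩ :=
    eq_of_adj_of_adj_of_adj (h₂ ▸ hadj (hc 2)) (hadj (hc 3)) (h₀ ▸ hadj (hc 4))
  refine ⟨φ₂ * φ₁, fun i => ?_⟩
  fin_cases i
  exacts [h₀, h₁, h₂, h₃, h₄]

theorem stmt_17 (u v : Fin 5 → Fin 2 × Fin 10)
    (hu : Function.Injective u)
    (hc : ∀ i, dodecahedron.Adj (u i) (u (i + 1)))
    (hv : ∀ i, dodecahedron.Adj (u i) (v i)) (hvu : ∀ i j, v i ≠ u j) :
    Nonempty (sTilde dodecahedron (Set.range u ∪ Set.range v) ≃g X7) := by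
  obtain ⟨φ, hφu⟩ := dodecahedron.exists_apply_eq_of_isPentagon hu hc
  have hφv (i : Fin 5) : φ (v i) = X7.toDodecahedron (i, 1) :=
    X7.eq_of_adj_of_forall_ne (hφu i ▸ φ.map_adj_iff.2 (hv i))
      fun j h => hvu i j (φ.injective (h.trans (hφu j).symm))
  have himage : φ '' (Set.range u ∪ Set.range v) = X7.standardCorona := by
    simp only [Set.image_union, ← Set.range_comp, Function.comp_def, hφu, hφv]
    rfl
  have e := φ.sTilde (Set.range u ∪ Set.range v)
  rw [himage] at e
  exact ⟨e.trans X7.isoSTilde.symm⟩
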